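/- arXiv:2105.12631 — 2 statements merged into one kernel-verified Lean document; each statement's English description precedes it below -/
import Mathlib

section
/- Let K be a pre-H-field whose valuation is nontrivial (O ≠ K) and which has 1-DIVP. Then Ψ is convex in the value group: for all f, g ∈ K^× with ¬(f ≍ 1) and ¬(g ≍ 1), and every h ∈ K^× with f† ≼ h ≼ g†, there exists k ∈ K^× with ¬(k ≍ 1) and k† ≍ h. -/
/-- `DIVPat D r` : the ordered differential field `K` with derivation `D` has `r`-DIVP:
for every polynomial `P ∈ K[Y₀,…,Y_r]` and all `f < g` with
`P(f, f′, …, f⁽ʳ⁾) < 0 < P(g, g′, …, g⁽ʳ⁾)` there is `y` with `f < y < g` and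
`P(y, y′, …, y⁽ʳ⁾) = 0`. -/
def DIVPat {K : Type*} [Field K] [LinearOrder K] [IsStrictOrderedRing K] (D : K → K) (r : ℕ) : Prop :=
  ∀ (P : MvPolynomial (Fin (r + 1)) K) (f g : K), f < g →
    MvPolynomial.eval (fun i : Fin (r + 1) => D^[(i : ℕ)] f) P < 0 →
    0 < MvPolynomial.eval (fun i : Fin (r + 1) => D^[(i : ℕ)] g) P →
    ∃ y : K, f < y ∧ y < g ∧ MvPolynomial.eval (fun i : Fin (r + 1) => D^[(i : ℕ)] y) P = 0

/-- The maximal ideal `𝔬 = {f ∈ O : f = 0 ∨ f⁻¹ ∉ O}` of the valuation ring `O`. -/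
def mIdeal {K : Type*} [Field K] (O : Subring K) : Set K :=
  {f | f ∈ O ∧ (f = 0 ∨ f⁻¹ ∉ O)}

/-- `f ≼ g` : `f ∈ O·g`. -/
def preceq {K : Type*} [Field K] (O : Subring K) (f g : K) : Prop :=
  ∃ h ∈ O, f = h * g

/-- `f ≺ g` : `g ≠ 0` and `f/g ∈ 𝔬`. -/
def precl {K : Type*} [Field K] (O : Subring K) (f g : K) : Prop :=
  g ≠ 0 ∧ f / g ∈ mIdeal O

/-- `f ≍ g` : `f ≼ g` and `g ≼ f`. -/
def asymp {K : Type*} [Field K] (O : Subring K) (f g : K) : Prop :=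
  preceq O f g ∧ preceq O g f

/-- `K` (an ordered field), equipped with the derivation `D` and the valuation ring `O`,
is a pre-`H`-field. -/
structure IsPreHField {K : Type*} [Field K] [LinearOrder K] [IsStrictOrderedRing K] (D : K → K) (O : Subring K) : Prop where
  map_add : ∀ a b : K, D (a + b) = D a + D b
  leibniz : ∀ a b : K, D (a * b) = a * D b + b * D a
  mem_or_inv_mem : ∀ f : K, f ≠ 0 → f ∈ O ∨ f⁻¹ ∈ O
  convex : ∀ a b : K, 0 ≤ a → a ≤ b → b ∈ O → a ∈ O
  deriv_pos : ∀ f : K, (∀ g ∈ O, g < f) → 0 < D f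
  small : ∀ f g : K, f ≠ 0 → g ≠ 0 → preceq O f 1 → precl O g 1 →
    precl O (D f) (D g / g)

section Aux
variable {K : Type*} [Field K] [LinearOrder K] [IsStrictOrderedRing K] {D : K → K} {O : Subring K}

lemma d_one (hK : IsPreHField D O) : D 1 = 0 := by
  have := hK.leibniz 1 1
  simp at this
  linarith

lemma d_zero (hK : IsPreHField D O) : D 0 = 0 := by
  have := hK.map_add 0 0
  simp at this
  linarith

lemma d_neg (hK : IsPreHField D O) (x : K) : D (-x) = -D x := by
  have := hK.map_add x (-x)
  simp [d_zero hK] at this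
  linarith

lemma d_inv (hK : IsPreHField D O) {x : K} (hx : x ≠ 0) : D x⁻¹ = -D x / x ^ 2 := by
  have h1 := hK.leibniz x x⁻¹
  rw [mul_inv_cancel₀ hx, d_one hK] at h1
  field_simp at h1 ⊢
  linarith

lemma logd_inv (hK : IsPreHField D O) {x : K} (hx : x ≠ 0) : D x⁻¹ / x⁻¹ = -(D x / x) := by
  rw [d_inv hK hx]
  field_simp

lemma mIdeal_abs_lt_one (hK : IsPreHField D O) {x : K} (hx : x ∈ mIdeal O) : |x| < 1 := by
  obtain ⟨hxO, hx2⟩ := hx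
  rcases hx2 with rfl | hinv
  · simpa using one_pos
  by_contra hle
  push_neg at hle
  have hx0 : x ≠ 0 := by intro h; rw [h] at hle; simp at hle; linarith
  have habs : |x⁻¹| ≤ 1 := by
    rw [abs_inv]
    rw [inv_le_one_iff₀]
    right; exact hle
  have h1 : |x⁻¹| ∈ O := hK.convex _ 1 (abs_nonneg _) habs O.one_mem
  rcases abs_choice x⁻¹ with h | h
  · exact hinv (h ▸ h1)
  · have h2 : -|x⁻¹| ∈ O := O.neg_mem h1
    rw [h, neg_neg] at h2
    exact hinv h2

lemma mIdeal_mul {v m : K} (hv : v ∈ O) (hm : m ∈ mIdeal O) : v * m ∈ mIdeal O := by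
  obtain ⟨hmO, hm2⟩ := hm
  refine ⟨O.mul_mem hv hmO, ?_⟩
  by_cases h0 : v * m = 0
  · exact Or.inl h0
  right
  intro hinvO
  rcases hm2 with rfl | hminv
  · simp at h0
  have : m⁻¹ = v * (v * m)⁻¹ := by
    have hv0 : v ≠ 0 := fun h => h0 (by rw [h, zero_mul])
    have hm0 : m ≠ 0 := fun h => h0 (by rw [h, mul_zero])
    field_simp
  exact hminv (this ▸ O.mul_mem hv hinvO)

lemma dichotomy (hK : IsPreHField D O) {a h : K} (hh : h ≠ 0) (hab : preceq O a h) :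
    precl O a h ∨ asymp O a h := by
  obtain ⟨u, hu, rfl⟩ := hab
  by_cases hu0 : u = 0
  · left
    refine ⟨hh, ?_⟩
    rw [hu0, zero_mul, zero_div]
    exact ⟨O.zero_mem, Or.inl rfl⟩
  by_cases h1 : u⁻¹ ∈ O
  · right
    refine ⟨⟨u, hu, rfl⟩, ⟨u⁻¹, h1, by field_simp⟩⟩
  · left
    refine ⟨hh, ?_⟩
    rw [mul_div_assoc, div_self hh, mul_one]
    exact ⟨hu, Or.inr h1⟩

lemma not_precl_precl {a b : K} (h1 : precl O a b) (h2 : precl O b a) : False := by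
  obtain ⟨hb, hab, hab2⟩ := h1
  obtain ⟨ha, hba, hba2⟩ := h2
  have h0 : a / b ≠ 0 := div_ne_zero ha hb
  rcases hab2 with h | h
  · exact h0 h
  apply h
  rw [← one_div, div_div_eq_mul_div, one_mul]
  exact hba

lemma precl_abs_lt (hK : IsPreHField D O) {a b : K} (h : precl O a b) : |a| < |b| := by
  obtain ⟨hb, hm⟩ := h
  have := mIdeal_abs_lt_one hK hm
  rw [abs_div] at this
  have hb0 : 0 < |b| := abs_pos.mpr hb
  calc |a| = |a| / |b| * |b| := by field_simp
  _ < 1 * |b| := by apply mul_lt_mul_of_pos_right this hb0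
  _ = |b| := one_mul _

lemma preceq_neg_left {a b : K} (h : preceq O a b) : preceq O (-a) b := by
  obtain ⟨u, hu, rfl⟩ := h
  exact ⟨-u, O.neg_mem hu, by ring⟩

lemma preceq_neg_right {a b : K} (h : preceq O a b) : preceq O a (-b) := by
  obtain ⟨u, hu, rfl⟩ := h
  exact ⟨-u, O.neg_mem hu, by ring⟩

end Aux

theorem stmt3 {K : Type*} [Field K] [LinearOrder K] [IsStrictOrderedRing K] (D : K → K) (O : Subring K)
    (hK : IsPreHField D O) (hnt : ∃ f : K, f ∉ O) (hdivp : DIVPat D 1) :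
    ∀ f g h : K, f ≠ 0 → g ≠ 0 → h ≠ 0 → ¬ asymp O f 1 → ¬ asymp O g 1 →
      preceq O (D f / f) h → preceq O h (D g / g) →
      ∃ k : K, k ≠ 0 ∧ ¬ asymp O k 1 ∧ asymp O (D k / k) h := by
  intro f g h hf hg hh hfa hga hfh hhg
  -- extract an infinitesimal representative F of f
  have hFex : ∃ F : K, F ≠ 0 ∧ F ∈ O ∧ F⁻¹ ∉ O ∧
      (D F / F = D f / f ∨ D F / F = -(D f / f)) := by
    rcases hK.mem_or_inv_mem f hf with h1 | h1
    · refine ⟨f, hf, h1, ?_, Or.inl rfl⟩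
      intro hinv
      exact hfa ⟨⟨f, h1, (mul_one f).symm⟩, ⟨f⁻¹, hinv, (inv_mul_cancel₀ hf).symm⟩⟩
    · refine ⟨f⁻¹, inv_ne_zero hf, h1, ?_, Or.inr (logd_inv hK hf)⟩
      rw [inv_inv]
      intro hmem
      exact hfa ⟨⟨f, hmem, (mul_one f).symm⟩, ⟨f⁻¹, h1, (inv_mul_cancel₀ hf).symm⟩⟩
  obtain ⟨F, hF0, hFO, hFiO, hFlog⟩ := hFex
  -- extract a positive infinite representative G of g
  have hGex : ∃ G : K, 0 < G ∧ G ∉ O ∧ (D G / G = D g / g ∨ D G / G = -(D g / g)) := by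
    have base : ∃ G1 : K, G1 ≠ 0 ∧ G1 ∉ O ∧
        (D G1 / G1 = D g / g ∨ D G1 / G1 = -(D g / g)) := by
      rcases hK.mem_or_inv_mem g hg with h1 | h1
      · refine ⟨g⁻¹, inv_ne_zero hg, ?_, Or.inr (logd_inv hK hg)⟩
        intro hmem
        exact hga ⟨⟨g, h1, (mul_one g).symm⟩, ⟨g⁻¹, hmem, (inv_mul_cancel₀ hg).symm⟩⟩
      · by_cases h2 : g ∈ O
        · exact absurd ⟨⟨g, h2, (mul_one g).symm⟩, ⟨g⁻¹, h1, (inv_mul_cancel₀ hg).symm⟩⟩ hga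
        · exact ⟨g, hg, h2, Or.inl rfl⟩
    obtain ⟨G1, h0, hO, hlog⟩ := base
    rcases h0.lt_or_gt with hneg | hpos
    · refine ⟨-G1, by linarith, fun hm => hO (by simpa using O.neg_mem hm), ?_⟩
      rw [d_neg hK, neg_div_neg_eq]
      exact hlog
    · exact ⟨G1, hpos, hO, hlog⟩
  obtain ⟨G, hGpos, hGO, hGlog⟩ := hGex
  have hGbig : ∀ x ∈ O, x < G := by
    intro x hx
    by_contra hc
    push_neg at hc
    exact hGO (hK.convex G x hGpos.le hc hx)
  have hDG : 0 < D G := hK.deriv_pos G hGbig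
  have hG1 : 1 < G := hGbig 1 O.one_mem
  have hGlp : 0 < D G / G := div_pos hDG hGpos
  -- transfer the asymptotic hypotheses to F and G
  have hFh : preceq O (D F / F) h := by
    rcases hFlog with he | he
    · rw [he]; exact hfh
    · rw [he]; exact preceq_neg_left hfh
  have hhG : preceq O h (D G / G) := by
    rcases hGlog with he | he
    · rw [he]; exact hhg
    · rw [he]; exact preceq_neg_right hhg
  rcases dichotomy hK hh hFh with hs1 | ha1
  swap
  · -- h ≍ f†: take k = f
    refine ⟨f, hf, hfa, ?_⟩
    rcases hFlog with he | he
    · rw [← he]; exact ha1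
    · rw [he] at ha1
      exact ⟨by simpa using preceq_neg_left ha1.1, by simpa using preceq_neg_right ha1.2⟩
  rcases dichotomy hK (ne_of_gt hGlp) hhG with hs2 | ha2
  swap
  · -- h ≍ g†: take k = g
    refine ⟨g, hg, hga, ?_⟩
    rcases hGlog with he | he
    · rw [← he]; exact ⟨ha2.2, ha2.1⟩
    · rw [he] at ha2
      exact ⟨by simpa using preceq_neg_left ha2.2, by simpa using preceq_neg_right ha2.1⟩
  -- strict case: f† ≺ h ≺ g†
  have habs : |h| < D G / G := by
    have := precl_abs_lt hK hs2
    rwa [abs_of_pos hGlp] at this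
  set P : MvPolynomial (Fin (1 + 1)) K :=
    MvPolynomial.X 1 - MvPolynomial.C h * MvPolynomial.X 0 with hP
  have hev : ∀ y : K, MvPolynomial.eval (fun i : Fin (1 + 1) => D^[(i : ℕ)] y) P
      = D y - h * y := by
    intro y
    simp [hP]
  have hmain : ∃ y : K, 0 < y ∧ D y = h * y := by
    rcases hh.lt_or_gt with hneg | hpos
    · -- h < 0 : endpoints G⁻¹ and 1
      have hGi : (0 : K) < G⁻¹ := inv_pos.mpr hGpos
      have hGi1 : G⁻¹ < 1 := by
        rw [inv_lt_one_iff₀]; right; exact hG1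
      have h1 : -(D G / G) < h := by
        have := neg_abs_le h
        linarith
      have e1 : MvPolynomial.eval (fun i : Fin (1 + 1) => D^[(i : ℕ)] G⁻¹) P < 0 := by
        rw [hev, d_inv hK (ne_of_gt hGpos)]
        have key : -D G / G ^ 2 - h * G⁻¹ = (-(D G / G) - h) / G := by
          field_simp
        rw [key]
        apply div_neg_of_neg_of_pos _ hGpos
        linarith
      have e2 : 0 < MvPolynomial.eval (fun i : Fin (1 + 1) => D^[(i : ℕ)] (1 : K)) P := by
        rw [hev, d_one hK]
        simpa using hneg
      obtain ⟨y, hy1, _, hy3⟩ := hdivp P G⁻¹ 1 hGi1 e1 e2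
      rw [hev] at hy3
      exact ⟨y, lt_trans hGi hy1, by linarith⟩
    · -- h > 0 : endpoints 1 and G
      have e1 : MvPolynomial.eval (fun i : Fin (1 + 1) => D^[(i : ℕ)] (1 : K)) P < 0 := by
        rw [hev, d_one hK]
        simpa using hpos
      have e2 : 0 < MvPolynomial.eval (fun i : Fin (1 + 1) => D^[(i : ℕ)] G) P := by
        rw [hev]
        have h1 : h < D G / G := lt_of_le_of_lt (le_abs_self h) habs
        have h2 : h * G < D G / G * G := mul_lt_mul_of_pos_right h1 hGpos
        rw [div_mul_cancel₀ _ (ne_of_gt hGpos)] at h2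
        linarith
      obtain ⟨y, hy1, _, hy3⟩ := hdivp P 1 G hG1 e1 e2
      rw [hev] at hy3
      exact ⟨y, lt_trans one_pos hy1, by linarith⟩
  obtain ⟨y, hy0, hyd⟩ := hmain
  have hylog : D y / y = h := by
    rw [hyd, mul_div_assoc, div_self (ne_of_gt hy0), mul_one]
  refine ⟨y, ne_of_gt hy0, ?_, ?_⟩
  · rintro ⟨⟨u, hu, hyu⟩, ⟨v, hv, h1v⟩⟩
    have hyO : y ∈ O := by rw [hyu, mul_one]; exact hu
    have hyiO : y⁻¹ ∈ O := by
      have hve : v = y⁻¹ := eq_inv_of_mul_eq_one_left h1v.symm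
      exact hve ▸ hv
    have hsmall := hK.small y F (ne_of_gt hy0) hF0 ⟨y, hyO, (mul_one y).symm⟩
      ⟨one_ne_zero, by rw [div_one]; exact ⟨hFO, Or.inr hFiO⟩⟩
    obtain ⟨hne, hmem⟩ := hsmall
    have hprecl : precl O h (D F / F) := by
      refine ⟨hne, ?_⟩
      have key : h / (D F / F) = y⁻¹ * (D y / (D F / F)) := by
        rw [← hylog]
        field_simp
      rw [key]
      exact mIdeal_mul hyiO hmem
    exact not_precl_precl hs1 hprecl
  · rw [hylog]
    exact ⟨⟨1, O.one_mem, (one_mul h).symm⟩, ⟨1, O.one_mem, (one_mul h).symm⟩⟩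
end

section
/- Let K be an H-field with O ≠ K having 2-DIVP. Then for every a ∈ K the operator ∂² − a splits over K[i]: there exist u, v ∈ K with u′ + u² − v² = a and v′ + 2uv = 0 (equivalently, z = u + vi in the differential field K[i] with i² = −1 satisfies z′ + z² = a, so that ∂² − a = (∂ + z)(∂ − z)). -/
/-- The valuation ring `O = {f : |f| ≤ c for some constant c}` of the ordered differential
field `K` with derivation `D`. -/
def Oring {K : Type*} [Field K] [LinearOrder K] [IsStrictOrderedRing K] (D : K → K) : Set K :=
  {f | ∃ c : K, D c = 0 ∧ |f| ≤ c}

/-- The maximal ideal `𝔬 = {f : |f| < c for all positive constants c}` of `O`. -/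
def oideal {K : Type*} [Field K] [LinearOrder K] [IsStrictOrderedRing K] (D : K → K) : Set K :=
  {f | ∀ c : K, D c = 0 → 0 < c → |f| < c}

/-- `f ≼ g` : `|f| ≤ c|g|` for some constant `c`. -/
def hpreceq {K : Type*} [Field K] [LinearOrder K] [IsStrictOrderedRing K] (D : K → K) (f g : K) : Prop :=
  ∃ c : K, D c = 0 ∧ |f| ≤ c * |g|

/-- `f ≍ g` : `f ≼ g` and `g ≼ f`. -/
def hasymp {K : Type*} [Field K] [LinearOrder K] [IsStrictOrderedRing K] (D : K → K) (f g : K) : Prop :=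
  hpreceq D f g ∧ hpreceq D g f

/-- The ordered field `K` with derivation `D` is an `H`-field. -/
structure IsHField {K : Type*} [Field K] [LinearOrder K] [IsStrictOrderedRing K] (D : K → K) : Prop where
  map_add : ∀ a b : K, D (a + b) = D a + D b
  leibniz : ∀ a b : K, D (a * b) = a * D b + b * D a
  deriv_pos : ∀ f : K, (∀ c : K, D c = 0 → c < f) → 0 < D f
  res_const : ∀ f ∈ Oring D, ∃ c : K, D c = 0 ∧ f - c ∈ oideal D

/-- `ω(z) = −2z′ − z²`. -/
def omg {K : Type*} [Field K] [LinearOrder K] [IsStrictOrderedRing K] (D : K → K) (z : K) : K :=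
  -2 * D z - z ^ 2

/-- `σ(y) = ω(−y†) + y²`. -/
def sig {K : Type*} [Field K] [LinearOrder K] [IsStrictOrderedRing K] (D : K → K) (y : K) : K :=
  omg D (-(D y / y)) + y ^ 2

section Stmt13Aux

open MvPolynomial

variable {K : Type*} [Field K] [LinearOrder K] [IsStrictOrderedRing K] {D : K → K}

lemma aux_d0 (hK : IsHField D) : D 0 = 0 := by
  have h := hK.map_add 0 0
  rw [add_zero] at h
  linarith

lemma aux_d1 (hK : IsHField D) : D 1 = 0 := by
  have h := hK.leibniz 1 1
  rw [mul_one, one_mul] at h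
  linarith

lemma aux_dneg (hK : IsHField D) (x : K) : D (-x) = -(D x) := by
  have h := hK.map_add x (-x)
  rw [add_neg_cancel, aux_d0 hK] at h
  linarith

lemma aux_dsub (hK : IsHField D) (x y : K) : D (x - y) = D x - D y := by
  rw [sub_eq_add_neg, hK.map_add, aux_dneg hK]; ring

lemma aux_d2 (hK : IsHField D) : D (2:K) = 0 := by
  have h : (2:K) = 1 + 1 := by norm_num
  rw [h, hK.map_add, aux_d1 hK]; ring

lemma aux_dm1 (hK : IsHField D) : D ((-1):K) = 0 := by
  have h : ((-1):K) = -(1:K) := by norm_num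
  rw [h, aux_dneg hK, aux_d1 hK]; ring

lemma aux_dm2 (hK : IsHField D) : D ((-2):K) = 0 := by
  have h : ((-2):K) = -(2:K) := by norm_num
  rw [h, aux_dneg hK, aux_d2 hK]; ring

lemma aux_dm4 (hK : IsHField D) : D ((-4):K) = 0 := by
  have h : ((-4):K) = -((2:K) + 2) := by norm_num
  rw [h, aux_dneg hK, hK.map_add, aux_d2 hK]; ring

lemma aux_dcmul (hK : IsHField D) {c : K} (hc : D c = 0) (x : K) : D (c*x) = c * D x := by
  rw [hK.leibniz, hc]; ring

lemma aux_dsq (hK : IsHField D) (x : K) : D (x^2) = 2*x*D x := by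
  rw [pow_two, hK.leibniz]; ring

lemma aux_dinv (hK : IsHField D) {x : K} (hx : x ≠ 0) : D x⁻¹ = -(D x) * (x⁻¹ * x⁻¹) := by
  have h := hK.leibniz x x⁻¹
  rw [mul_inv_cancel₀ hx, aux_d1 hK] at h
  have h2 : x * D x⁻¹ = -(x⁻¹ * D x) := by linarith
  refine mul_left_cancel₀ hx ?_
  rw [h2]
  field_simp

/-- A positive element smaller than every positive constant has negative derivative. -/
lemma aux_posinf_dneg (hK : IsHField D) {e : K} (he : 0 < e)
    (ho : ∀ c : K, D c = 0 → 0 < c → e < c) : D e < 0 := by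
  have hinv : ∀ c : K, D c = 0 → c < e⁻¹ := by
    intro c hc
    rcases le_or_gt c 0 with h | h
    · exact lt_of_le_of_lt h (inv_pos.mpr he)
    · have hci : D c⁻¹ = 0 := by rw [aux_dinv hK (ne_of_gt h), hc]; ring
      have h2 := ho c⁻¹ hci (inv_pos.mpr h)
      have h3 : c * e < 1 := by
        have h5 := mul_lt_mul_of_pos_left h2 h
        rwa [mul_inv_cancel₀ (ne_of_gt h)] at h5
      have h4 : e * e⁻¹ = 1 := mul_inv_cancel₀ (ne_of_gt he)
      nlinarith [inv_pos.mpr he]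
  have hpos := hK.deriv_pos e⁻¹ hinv
  rw [aux_dinv hK (ne_of_gt he)] at hpos
  nlinarith [mul_pos (inv_pos.mpr he) (inv_pos.mpr he)]

lemma aux_ev_ric (a y : K) :
    eval (fun i : Fin (2+1) => D^[(i:ℕ)] y) (X 1 + X 0 ^ 2 - C a) = D y + y^2 - a := by
  simp only [map_sub, map_add, map_pow, eval_X, eval_C]
  rfl

lemma aux_ev_sq (b y : K) :
    eval (fun i : Fin (2+1) => D^[(i:ℕ)] y) (X 0 ^ 2 - C b) = y^2 - b := by
  simp only [map_sub, map_pow, eval_X, eval_C]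
  rfl

lemma aux_ev_M (a b y : K) :
    eval (fun i : Fin (2+1) => D^[(i:ℕ)] y)
      (X 2 + C 6 * X 0 * X 1 + C 4 * X 0 ^ 3 - C (4*a) * X 0 - C b)
    = D (D y) + 6*y*(D y) + 4*y^3 - 4*a*y - b := by
  simp only [map_sub, map_add, map_mul, map_pow, eval_X, eval_C]
  rfl

lemma aux_ev_Q (a y : K) :
    eval (fun i : Fin (2+1) => D^[(i:ℕ)] y)
      (C (-2) * (X 2 * X 0) + C 3 * X 1 ^ 2 - C 4 * X 0 ^ 4 - C (4*a) * X 0 ^ 2)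
    = -2*(D (D y) * y) + 3*(D y)^2 - 4*y^4 - 4*a*y^2 := by
  simp only [map_sub, map_add, map_mul, map_pow, eval_X, eval_C]
  rfl

/-- From a nonzero root of `-2v''v + 3v'^2 - 4v^4 - 4av^2` we get the pair `(u, v)`
with `u = -v'/(2v)`. -/
lemma aux_solveQ (hK : IsHField D) {a v : K} (hv : v ≠ 0)
    (hQ : -2*(D (D v) * v) + 3*(D v)^2 - 4*v^4 - 4*a*v^2 = 0) :
    ∃ u : K, D u + u ^ 2 - v ^ 2 = a ∧ D v + 2 * u * v = 0 := by
  have h2v : (2:K)*v ≠ 0 := mul_ne_zero two_ne_zero hv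
  have hi : (2*v) * (2*v)⁻¹ = 1 := mul_inv_cancel₀ h2v
  have hq : D (D v / (2*v)) = D v * (-(2*(D v)) * ((2*v)⁻¹ * (2*v)⁻¹)) + (2*v)⁻¹ * (D (D v)) := by
    rw [div_eq_mul_inv, hK.leibniz, aux_dinv hK h2v, aux_dcmul hK (aux_d2 hK)]
  refine ⟨-(D v / (2*v)), ?_, ?_⟩
  · rw [aux_dneg hK, hq]
    linear_combination ((2*v)⁻¹*(2*v)⁻¹) * hQ
      + (D (D v)*(2*v)⁻¹ + (v^2+a)*(2*v*(2*v)⁻¹+1)) * hi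
  · field_simp
    ring


lemma aux_arith1 (c0 a d : K) (hc0 : 0 ≤ c0) (ha_le : a ≤ c0) (h1 : -1 < d) :
    (0:K) + 6 * (-(c0+1)) * 0 + 4*(-(c0+1))^3 - 4*a*(-(c0+1)) - d < 0 := by
  nlinarith [mul_nonneg (sub_nonneg.mpr ha_le) (by linarith : (0:K) ≤ c0+1),
    mul_nonneg hc0 hc0, mul_nonneg (mul_nonneg hc0 hc0) hc0]

lemma aux_arith2 (c0 a d : K) (hc0 : 0 ≤ c0) (ha_le : a ≤ c0) (h2 : d < 1) :
    0 < (0:K) + 6 * (c0+1) * 0 + 4*(c0+1)^3 - 4*a*(c0+1) - d := by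
  nlinarith [mul_nonneg (sub_nonneg.mpr ha_le) (by linarith : (0:K) ≤ c0+1),
    mul_nonneg hc0 hc0, mul_nonneg (mul_nonneg hc0 hc0) hc0]

end Stmt13Aux

set_option maxHeartbeats 2000000 in
theorem stmt13 {K : Type*} [Field K] [LinearOrder K] [IsStrictOrderedRing K] (D : K → K)
    (hK : IsHField D) (hnt : ∃ f : K, f ∉ Oring D) (hdivp : DIVPat D 2) :
    ∀ a : K, ∃ u v : K, D u + u ^ 2 - v ^ 2 = a ∧ D v + 2 * u * v = 0 := by
  classical
  intro a
  open MvPolynomial in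
  by_cases haO : a ∈ Oring D
  · -- a is bounded by a constant
    obtain ⟨c0, hc0D, hca⟩ := haO
    obtain ⟨ha_ge, ha_le⟩ := abs_le.mp hca
    have hc0 : 0 ≤ c0 := le_trans (abs_nonneg a) hca
    have hDN : D (c0 + 1) = 0 := by rw [hK.map_add, hc0D, aux_d1 hK]; ring
    by_cases hfast : ∃ e : K, 0 < e ∧ e ∈ oideal D ∧ D e ≤ -1
    · -- FAST case: a positive infinitesimal with derivative ≤ -1 exists
      obtain ⟨e, he0, heo, hed⟩ := hfast
      have heo' : ∀ c : K, D c = 0 → 0 < c → |e| < c := heo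
      have hl1 : (1:K) ≤ c0 + 1 := by linarith
      have hl0 : (0:K) < c0 + 1 := by linarith
      have hDl2 : D ((c0+1)^2) = 0 := by rw [aux_dsq hK, hDN]; ring
      have hl2pos : (0:K) < (c0+1)^2 := by positivity
      have hDl2i : D (((c0+1)^2)⁻¹) = 0 := by
        rw [aux_dinv hK (ne_of_gt hl2pos), hDl2]; ring
      have he_small : e < ((c0+1)^2)⁻¹ :=
        lt_of_le_of_lt (le_abs_self e) (heo' _ hDl2i (inv_pos.mpr hl2pos))
      have he1 : e < 1 := lt_of_le_of_lt (le_abs_self e) (heo' 1 (aux_d1 hK) one_pos)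
      have hkey : (c0+1)^2 * e < 1 := by
        have h5 := mul_lt_mul_of_pos_left he_small hl2pos
        rwa [mul_inv_cancel₀ (ne_of_gt hl2pos)] at h5
      obtain ⟨u, hu1, hu2, hu3⟩ := hdivp (X 1 + X 0 ^ 2 - C a) ((c0+1)*e) (c0+1)
        (by have h9 := mul_lt_mul_of_pos_left he1 hl0; linarith [h9])
        (by
          rw [aux_ev_ric, aux_dcmul hK hDN]
          have h6 : (c0+1) * D e ≤ (c0+1) * (-1) :=
            mul_le_mul_of_nonneg_left hed (by linarith)
          have h7 := mul_lt_mul_of_pos_right hkey he0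
          linarith [h6, h7])
        (by rw [aux_ev_ric, hDN]; linarith [sq_nonneg c0])
      rw [aux_ev_ric] at hu3
      exact ⟨u, 0, by linear_combination hu3, by rw [aux_d0 hK]; ring⟩
    · -- SLOW case: every infinitesimal has derivative in (-1, 1); then |D a| < 1
      obtain ⟨c1, hc1D, hd⟩ := hK.res_const a ⟨c0, hc0D, hca⟩
      have hd' : ∀ c : K, D c = 0 → 0 < c → |a - c1| < c := hd
      have hDd : D (a - c1) = D a := by rw [aux_dsub hK, hc1D]; ring
      have hDa : -1 < D a ∧ D a < 1 := by
        rcases lt_trichotomy (a - c1) 0 with h | h | h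
        · have hpos : 0 < -(a - c1) := by linarith
          have hom : ∀ c : K, D c = 0 → 0 < c → -(a - c1) < c := by
            intro c hc hcp
            have h9 := hd' c hc hcp
            rw [abs_of_neg h] at h9
            exact h9
          have hdn : D (-(a - c1)) < 0 := aux_posinf_dneg hK hpos hom
          rw [aux_dneg hK, hDd] at hdn
          constructor
          · linarith
          · by_contra hcon
            push_neg at hcon
            refine hfast ⟨-(a - c1), hpos, ?_, ?_⟩
            · intro c hc hcp
              rw [abs_neg]
              exact hd' c hc hcp
            · rw [aux_dneg hK, hDd]; linarith
        · have h0 : D a = 0 := by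
            rw [← hDd, h, aux_d0 hK]
          rw [h0]; norm_num
        · have hom : ∀ c : K, D c = 0 → 0 < c → (a - c1) < c := by
            intro c hc hcp
            have h9 := hd' c hc hcp
            rw [abs_of_pos h] at h9
            exact h9
          have hdn : D (a - c1) < 0 := aux_posinf_dneg hK h hom
          rw [hDd] at hdn
          constructor
          · by_contra hcon
            push_neg at hcon
            refine hfast ⟨a - c1, h, hd, ?_⟩
            rw [hDd]; linarith
          · linarith
      obtain ⟨hDa1, hDa2⟩ := hDa
      -- the cubic M(u) = u'' + 6uu' + 4u³ - 4au - a'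
      have hDnN : D (-(c0+1)) = 0 := by rw [aux_dneg hK, hDN]; ring
      have hDDN : D (D (c0+1)) = 0 := by rw [hDN]; exact aux_d0 hK
      have hDDnN : D (D (-(c0+1))) = 0 := by rw [hDnN]; exact aux_d0 hK
      obtain ⟨u0, hu01, hu02, hu03⟩ := hdivp
        (X 2 + C 6 * X 0 * X 1 + C 4 * X 0 ^ 3 - C (4*a) * X 0 - C (D a))
        (-(c0+1)) (c0+1) (by linarith)
        (by
          rw [aux_ev_M, hDDnN, hDnN]
          have h9 := aux_arith1 c0 a (D a) hc0 ha_le hDa1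
          linarith [h9])
        (by
          rw [aux_ev_M, hDDN, hDN]
          have h9 := aux_arith2 c0 a (D a) hc0 ha_le hDa2
          linarith [h9])
      rw [aux_ev_M] at hu03
      obtain ⟨w, hw⟩ : ∃ w : K, w = D u0 + u0^2 - a := ⟨_, rfl⟩
      have hDw : D w = -4*u0*w := by
        have h1 : D w = D (D u0) + 2*u0*(D u0) - D a := by
          rw [hw, aux_dsub hK, hK.map_add, aux_dsq hK]
        rw [h1, hw]
        linear_combination hu03
      rcases lt_trichotomy w 0 with hwneg | hwzero | hwpos
      · -- w < 0 : u0 is a lower bound for the Riccati equation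
        obtain ⟨u1, hu11, hu12, hu13⟩ := hdivp (X 1 + X 0 ^ 2 - C a) u0 (c0+1) hu02
          (by rw [aux_ev_ric]; linarith [hw])
          (by rw [aux_ev_ric, hDN]; linarith [sq_nonneg c0])
        rw [aux_ev_ric] at hu13
        exact ⟨u1, 0, by linear_combination hu13, by rw [aux_d0 hK]; ring⟩
      · exact ⟨u0, 0, by linear_combination hw.symm + hwzero, by rw [aux_d0 hK]; ring⟩
      · -- w > 0 : v = √w
        obtain ⟨v, hv1, hv2, hv3⟩ := hdivp (X 0 ^ 2 - C w) 0 (w+1) (by linarith)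
          (by
            rw [aux_ev_sq]
            linarith)
          (by
            rw [aux_ev_sq]
            linarith [sq_nonneg w])
        rw [aux_ev_sq] at hv3
        refine ⟨u0, v, by linear_combination hw.symm - hv3, ?_⟩
        have h6 : v^2 = w := by linarith
        have hvd : 2*v*(D v) = D w := by
          have h5 : D (v^2) = D w := congrArg D h6
          rwa [aux_dsq hK] at h5
        have h7 : (2*v) * (D v + 2*u0*v) = 0 := by
          linear_combination hvd + hDw + 4*u0*h6
        rcases mul_eq_zero.mp h7 with h8 | h8
        · exact absurd h8 (mul_ne_zero two_ne_zero (ne_of_gt hv1))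
        · exact h8
  · -- a is not bounded by any constant
    have habs : ∀ c : K, D c = 0 → c < |a| := by
      intro c hc
      by_contra hcon
      push_neg at hcon
      exact haO ⟨c, hc, hcon⟩
    have h1a : 1 < |a| := habs 1 (aux_d1 hK)
    rcases lt_trichotomy a 0 with hneg | hzero | hpos
    · -- a < 0 : the oscillation-side analysis
      have ha1 : a < -1 := by
        rw [abs_of_neg hneg] at h1a; linarith
      -- s := sqrt(-a)
      obtain ⟨s, hs01, hs02, hs3⟩ := hdivp (X 0 ^ 2 - C (-a)) 0 (-a) (by linarith)
        (by rw [aux_ev_sq]; linarith)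
        (by
          rw [aux_ev_sq]
          have h9 : (0:K) < (-a)*(-(a+1)) := mul_pos (by linarith) (by linarith)
          linarith [h9])
      rw [aux_ev_sq] at hs3
      have hs0 : 0 < s := hs01
      have hsC : ∀ c : K, D c = 0 → c < s := by
        intro c hc
        by_contra hcon
        push_neg at hcon
        have hc2 : D (c^2) = 0 := by rw [aux_dsq hK, hc]; ring
        have h9 := habs (c^2) hc2
        rw [abs_of_neg hneg] at h9
        have h8 : s*s ≤ c*c := mul_self_le_mul_self (le_of_lt hs0) hcon
        linarith [h8]
      have hs1 : 1 < s := hsC 1 (aux_d1 hK)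
      have hs' : 0 < D s := hK.deriv_pos s hsC
      have hd1s : D (-s) = -(D s) := aux_dneg hK s
      have hd2s : D (D (-s)) = -(D (D s)) := by rw [hd1s, aux_dneg hK]
      rcases le_or_gt (3*s^2) (D s) with hric | hsmall
      · -- Riccati works: f = -2s, g = 0
        have hdf : D ((-2)*s) = (-2)*(D s) := aux_dcmul hK (aux_dm2 hK) s
        obtain ⟨u, hu1, hu2, hu3⟩ := hdivp (X 1 + X 0 ^ 2 - C a) ((-2)*s) 0
          (by linarith)
          (by rw [aux_ev_ric, hdf]; linarith [hric, hs3, mul_pos hs0 hs0])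
          (by rw [aux_ev_ric, aux_d0 hK]; linarith)
        rw [aux_ev_ric] at hu3
        exact ⟨u, 0, by linear_combination hu3, by rw [aux_d0 hK]; ring⟩
      · -- need the sigma-side; first: s'' > -7s³
        have hs'' : -7*s^3 < D (D s) := by
          by_contra hcon
          push_neg at hcon
          have hh : ∀ c : K, D c = 0 → c < D s + s^2 := by
            intro c hc
            have h1 := hsC c hc
            have h8 : 0 < (s-1)*s := mul_pos (by linarith) hs0
            linarith [h8]
          have hpos2 := hK.deriv_pos _ hh
          rw [hK.map_add, aux_dsq hK] at hpos2
          have h8 := mul_lt_mul_of_pos_left hsmall (by linarith : (0:K) < 2*s)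
          linarith [h8, mul_pos hs0 (mul_pos hs0 hs0)]
        have hE41 : 3*(D s)^2 - 2*s*(D (D s)) < 41*s^4 := by
          have e1 : (D s)^2 < 9*s^4 := by
            have h5 := mul_lt_mul'' hsmall hsmall (le_of_lt hs') (le_of_lt hs')
            nlinarith [h5]
          have e2 : -(2*s*(D (D s))) < 14*s^4 := by
            have h5 := mul_lt_mul_of_pos_left hs'' (by linarith : (0:K) < 2*s)
            nlinarith [h5]
          linarith
        rcases lt_trichotomy (3*(D s)^2 - 2*s*(D (D s))) 0 with hE | hE | hE
        · -- E < 0 : Q-pair (-s, -1)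
          have hddm1 : D (D ((-1):K)) = 0 := by rw [aux_dm1 hK]; exact aux_d0 hK
          obtain ⟨v, hv1, hv2, hv3⟩ := hdivp
            (C (-2) * (X 2 * X 0) + C 3 * X 1 ^ 2 - C 4 * X 0 ^ 4 - C (4*a) * X 0 ^ 2)
            (-s) (-1) (by linarith)
            (by
              rw [aux_ev_Q, hd2s, hd1s]
              have hq1 : -2*(-(D (D s)) * (-s)) + 3*(-(D s))^2 - 4*(-s)^4 - 4*a*(-s)^2
                  = 3*(D s)^2 - 2*s*(D (D s)) := by linear_combination (-4*s^2) * hs3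
              linarith [hq1])
            (by
              rw [aux_ev_Q, hddm1, aux_dm1 hK]
              have h9 := mul_lt_mul'' hs1 hs1 (by norm_num) (by norm_num)
              nlinarith [h9])
          rw [aux_ev_Q] at hv3
          have hvne : v ≠ 0 := by
            have : v < 0 := lt_trans hv2 (by norm_num)
            exact ne_of_lt this
          obtain ⟨u, he1, he2⟩ := aux_solveQ hK hvne hv3
          exact ⟨u, v, he1, he2⟩
        · -- E = 0 : v = -s is itself a root
          have hq0 : -2*(D (D (-s)) * (-s)) + 3*(D (-s))^2 - 4*(-s)^4 - 4*a*(-s)^2 = 0 := by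
            rw [hd2s, hd1s]
            linear_combination hE + (-4*s^2) * hs3
          have hvne : (-s) ≠ 0 := neg_ne_zero.mpr (ne_of_gt hs0)
          obtain ⟨u, he1, he2⟩ := aux_solveQ hK hvne hq0
          exact ⟨u, -s, he1, he2⟩
        · -- E > 0 : Q-pair (-4s, -s)
          have hdf1 : D ((-4)*s) = (-4)*(D s) := aux_dcmul hK (aux_dm4 hK) s
          have hdf2 : D (D ((-4)*s)) = (-4)*(D (D s)) := by
            rw [hdf1]; exact aux_dcmul hK (aux_dm4 hK) (D s)
          obtain ⟨v, hv1, hv2, hv3⟩ := hdivp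
            (C (-2) * (X 2 * X 0) + C 3 * X 1 ^ 2 - C 4 * X 0 ^ 4 - C (4*a) * X 0 ^ 2)
            ((-4)*s) (-s) (by linarith)
            (by
              rw [aux_ev_Q, hdf2, hdf1]
              have hq4 : -2*((-4)*(D (D s)) * ((-4)*s)) + 3*((-4)*(D s))^2 - 4*((-4)*s)^4
                    - 4*a*((-4)*s)^2
                  = 16*(3*(D s)^2 - 2*s*(D (D s))) - 960*s^4 := by
                linear_combination (-64*s^2) * hs3
              linarith [hq4, hE41, pow_pos hs0 4])
            (by
              rw [aux_ev_Q, hd2s, hd1s]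
              have hq1 : -2*(-(D (D s)) * (-s)) + 3*(-(D s))^2 - 4*(-s)^4 - 4*a*(-s)^2
                  = 3*(D s)^2 - 2*s*(D (D s)) := by linear_combination (-4*s^2) * hs3
              linarith [hq1])
          rw [aux_ev_Q] at hv3
          have hvne : v ≠ 0 := by
            have : v < 0 := lt_trans hv2 (by linarith)
            exact ne_of_lt this
          obtain ⟨u, he1, he2⟩ := aux_solveQ hK hvne hv3
          exact ⟨u, v, he1, he2⟩
    · exact absurd h1a (by rw [hzero]; norm_num)
    · -- a > 0 : Riccati with f = 0, g = 2√a
      have ha1 : 1 < a := by rwa [abs_of_pos hpos] at h1a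
      obtain ⟨s, hs01, hs02, hs3⟩ := hdivp (X 0 ^ 2 - C a) 0 a (by linarith)
        (by rw [aux_ev_sq]; linarith)
        (by
          rw [aux_ev_sq]
          have h9 := mul_lt_mul_of_pos_left ha1 hpos
          linarith [h9])
      rw [aux_ev_sq] at hs3
      have hs0 : 0 < s := hs01
      have hsC : ∀ c : K, D c = 0 → c < s := by
        intro c hc
        by_contra hcon
        push_neg at hcon
        have hc2 : D (c^2) = 0 := by rw [aux_dsq hK, hc]; ring
        have h9 := habs (c^2) hc2
        rw [abs_of_pos hpos] at h9
        have h8 : s*s ≤ c*c := mul_self_le_mul_self (le_of_lt hs0) hcon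
        linarith [h8]
      have hs' : 0 < D s := hK.deriv_pos s hsC
      have hdg : D (2*s) = 2*(D s) := aux_dcmul hK (aux_d2 hK) s
      obtain ⟨u, hu1, hu2, hu3⟩ := hdivp (X 1 + X 0 ^ 2 - C a) 0 (2*s) (by linarith)
        (by rw [aux_ev_ric, aux_d0 hK]; linarith)
        (by rw [aux_ev_ric, hdg]; linarith [hs', hs3, hpos])
      rw [aux_ev_ric] at hu3
      exact ⟨u, 0, by linear_combination hu3, by rw [aux_d0 hK]; ring⟩
end
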